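/- Let (Z,d) be a compact metric space. Suppose that for each k ∈ ℕ we are given a ball B_k = B(p_k, R_k) ⊆ Z, distinct points x_k^1, x_k^2, x_k^3 in the closed ball B̄(p_k, λ_k R_k) with d(x_k^i, x_k^j) > δ_k R_k for i ≠ j in {1,2,3}, where λ_k, δ_k > 0, and an η-quasi-Möbius homeomorphism g_k:Z→Z such that the points y_k^i := g_k(x_k^i) satisfy d(y_k^i, y_k^j) > δ' for i ≠ j, where η and δ' > 0 are independent of k. Suppose moreover that for each k the set D_k ⊆ B_k is (ε_k R_k)-dense in B_k, where ε_k > 0. If lim_{k→∞} λ_k = 0 and the sequence (ε_k/δ_k²) is bounded, then the Hausdorff distance dist_H(g_k(D_k), Z) → 0 as k → ∞. -/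

import Mathlib

open Metric Set MeasureTheory Filter Topology unitInterval
open scoped NNReal ENNReal

noncomputable section

/-- The length (total variation) of a continuous path. -/
def pathLength {Z : Type*} [MetricSpace Z] (γ : C(unitInterval, Z)) : ℝ≥0∞ :=
  eVariationOn γ Set.univ

/-- The (real-valued) arclength function of a path. -/
def pathVar {Z : Type*} [MetricSpace Z] (γ : C(unitInterval, Z)) (t : ℝ) : ℝ :=
  (eVariationOn γ {s : unitInterval | (s : ℝ) ≤ t}).toReal

/-- The arclength (Stieltjes) measure on the parameter interval associated to a path. -/
def lengthMeasure {Z : Type*} [MetricSpace Z] (γ : C(unitInterval, Z)) :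
    MeasureTheory.Measure ℝ :=
  letI := Classical.propDecidable (Monotone (pathVar γ))
  if h : Monotone (pathVar γ) then h.stieltjesFunction.measure else 0

/-- The line integral `∫_γ ρ ds` of a density `ρ` along a path `γ` (with respect to
arclength). -/
def pathIntegral {Z : Type*} [MetricSpace Z] (ρ : Z → ℝ≥0∞) (γ : C(unitInterval, Z)) : ℝ≥0∞ :=
  ∫⁻ t, ρ (γ (Set.projIcc 0 1 zero_le_one t)) ∂(lengthMeasure γ)

/-- A density is admissible for a path family if every rectifiable path in the family has
`ρ`-length at least one. -/
def Admissible {Z : Type*} [MetricSpace Z] (ρ : Z → ℝ≥0∞) (Γ : Set C(unitInterval, Z)) : Prop :=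
  ∀ γ ∈ Γ, pathLength γ < ⊤ → 1 ≤ pathIntegral ρ γ

/-- The `Q`-modulus of a family of paths in `Z`. -/
def modulus {Z : Type*} [MetricSpace Z] [MeasurableSpace Z] (Q : ℝ) (μ : Measure Z)
    (Γ : Set C(unitInterval, Z)) : ℝ≥0∞ :=
  ⨅ (ρ : Z → ℝ≥0∞) (_ : Measurable ρ) (_ : Admissible ρ Γ), ∫⁻ z, ρ z ^ Q ∂μ

/-- A path is nonconstant if it takes at least two values. -/
def Nonconstant {Z : Type*} [MetricSpace Z] (γ : C(unitInterval, Z)) : Prop :=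
  ∃ s t, γ s ≠ γ t

/-- A measure `μ` on a metric space is Ahlfors `Q`-regular. -/
def AhlforsRegular {Z : Type*} [MetricSpace Z] [MeasurableSpace Z] (μ : Measure Z)
    (Q : ℝ) : Prop :=
  ∃ C : ℝ≥0, 1 ≤ C ∧ ∀ (a : Z) (R : ℝ), 0 < R →
    ENNReal.ofReal R ≤ EMetric.diam (Set.univ : Set Z) →
      ENNReal.ofReal (R ^ Q) / C ≤ μ (Metric.ball a R) ∧
      μ (Metric.ball a R) ≤ C * ENNReal.ofReal (R ^ Q)

/-- The metric cross-ratio of a four-tuple of points. -/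
def crossRatio {Z : Type*} [MetricSpace Z] (z₁ z₂ z₃ z₄ : Z) : ℝ≥0 :=
  (nndist z₁ z₃ * nndist z₂ z₄) / (nndist z₁ z₄ * nndist z₂ z₃)

/-- A map is `η`-quasi-Möbius if it distorts cross-ratios of distinct four-tuples in a way
controlled by the homeomorphism `η : [0,∞) → [0,∞)`. -/
def IsQuasiMobius {X Y : Type*} [MetricSpace X] [MetricSpace Y] (η : ℝ≥0 ≃ₜ ℝ≥0)
    (f : X → Y) : Prop :=
  ∀ x₁ x₂ x₃ x₄ : X, x₁ ≠ x₂ → x₁ ≠ x₃ → x₁ ≠ x₄ → x₂ ≠ x₃ → x₂ ≠ x₄ → x₃ ≠ x₄ →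
    crossRatio (f x₁) (f x₂) (f x₃) (f x₄) ≤ η (crossRatio x₁ x₂ x₃ x₄)

/-- A map is `η`-quasisymmetric. -/
def IsQuasisymmetric {X Y : Type*} [MetricSpace X] [MetricSpace Y] (η : ℝ≥0 ≃ₜ ℝ≥0)
    (f : X → Y) : Prop :=
  ∀ x₁ x₂ x₃ : X, x₁ ≠ x₂ → x₁ ≠ x₃ → x₂ ≠ x₃ →
    nndist (f x₁) (f x₂) / nndist (f x₁) (f x₃) ≤ η (nndist x₁ x₂ / nndist x₁ x₃)

/-- A metric space is Ahlfors `Q`-regular (with respect to `Q`-dimensional Hausdorff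
measure). -/
def AhlforsRegularSpace (Y : Type*) [MetricSpace Y] (Q : ℝ) : Prop :=
  letI : MeasurableSpace Y := borel Y
  haveI : BorelSpace Y := ⟨rfl⟩
  AhlforsRegular (μH[Q] : Measure Y) Q

/-- The Ahlfors regular conformal dimension of a metric space: the infimum of the Hausdorff
dimensions of all Ahlfors regular metric spaces quasisymmetrically homeomorphic to it. -/
def arConfDim (Z : Type u) [MetricSpace Z] : ℝ≥0∞ :=
  sInf { D : ℝ≥0∞ | ∃ (Y : Type u) (_ : MetricSpace Y) (Q' : ℝ) (η : ℝ≥0 ≃ₜ ℝ≥0) (f : Z ≃ₜ Y),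
      AhlforsRegularSpace Y Q' ∧ IsQuasisymmetric η f ∧ D = dimH (Set.univ : Set Y) }

/-- The distance between two subsets of a metric space, as an extended real. -/
def setSep {Z : Type*} [MetricSpace Z] (E F : Set Z) : ℝ≥0∞ :=
  ⨅ (x ∈ E) (y ∈ F), edist x y

/-- The relative distance `Δ(E,F) = dist(E,F)/min(diam E, diam F)` of two sets. -/
def relDist {Z : Type*} [MetricSpace Z] (E F : Set Z) : ℝ≥0∞ :=
  setSep E F / min (EMetric.diam E) (EMetric.diam F)

/-- The family of paths joining `E` to `F`. -/
def joinPaths {Z : Type*} [MetricSpace Z] (E F : Set Z) : Set C(unitInterval, Z) :=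
  {γ | γ 0 ∈ E ∧ γ 1 ∈ F}

/-- A metric measure space is `Q`-Loewner if it is connected and the `Q`-modulus of the family
of paths joining two disjoint nondegenerate continua is bounded below by a positive decreasing
function of their relative distance. -/
def IsLoewner (Z : Type*) [MetricSpace Z] [MeasurableSpace Z] (Q : ℝ) (μ : Measure Z) : Prop :=
  ConnectedSpace Z ∧
  ∃ Ψ : ℝ≥0∞ → ℝ≥0∞, Antitone Ψ ∧ (∀ t, t ≠ 0 → t ≠ ⊤ → 0 < Ψ t) ∧
    ∀ E F : Set Z, IsCompact E → IsConnected E → E.Nontrivial →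
      IsCompact F → IsConnected F → F.Nontrivial → Disjoint E F →
      Ψ (relDist E F) ≤ modulus Q μ (joinPaths E F)

/-- A path is thick if every neighborhood of it in `C([0,1],Z)` contains a family of
nonconstant paths of positive `Q`-modulus. -/
def IsThick {Z : Type*} [MetricSpace Z] [MeasurableSpace Z] (Q : ℝ) (μ : Measure Z)
    (γ : C(unitInterval, Z)) : Prop :=
  ∀ ε : ℝ, 0 < ε → 0 < modulus Q μ {α | α ∈ Metric.ball γ ε ∧ Nonconstant α}

end

section AuxQM

variable {Z : Type*} [MetricSpace Z]

lemma aux_cr_le {a b c d : Z} (had : a ≠ d) (hbc : b ≠ c)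
    {t : ℝ≥0} (h : dist a c * dist b d ≤ (t : ℝ) * (dist a d * dist b c)) :
    crossRatio a b c d ≤ t := by
  have h14 : nndist a d ≠ 0 := by simpa using had
  have h23 : nndist b c ≠ 0 := by simpa using hbc
  rw [crossRatio, div_le_iff₀ (by positivity), ← NNReal.coe_le_coe]
  simp only [NNReal.coe_mul, coe_nndist]
  exact h

lemma aux_cr_ge {a b c d : Z} (had : a ≠ d) (hbc : b ≠ c)
    {s : ℝ≥0} (h : crossRatio a b c d ≤ s) :
    dist a c * dist b d ≤ (s : ℝ) * (dist a d * dist b c) := by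
  have h14 : nndist a d ≠ 0 := by simpa using had
  have h23 : nndist b c ≠ 0 := by simpa using hbc
  rw [crossRatio, div_le_iff₀ (by positivity), ← NNReal.coe_le_coe] at h
  simp only [NNReal.coe_mul, coe_nndist] at h
  exact h

lemma qm_est (η : ℝ≥0 ≃ₜ ℝ≥0) (hmono : Monotone η)
    (g : Z ≃ₜ Z) (hg : IsQuasiMobius η g) {a b c d : Z}
    (hab : a ≠ b) (hac : a ≠ c) (had : a ≠ d) (hbc : b ≠ c) (hbd : b ≠ d) (hcd : c ≠ d)
    {t : ℝ≥0} (h : dist a c * dist b d ≤ (t : ℝ) * (dist a d * dist b c)) :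
    dist (g a) (g c) * dist (g b) (g d)
      ≤ ((η t : ℝ≥0) : ℝ) * (dist (g a) (g d) * dist (g b) (g c)) := by
  have h1 : crossRatio a b c d ≤ t := aux_cr_le had hbc h
  have h2 := (hg a b c d hab hac had hbc hbd hcd).trans (hmono h1)
  exact aux_cr_ge (g.injective.ne had) (g.injective.ne hbc) h2

lemma eta_mono (η : ℝ≥0 ≃ₜ ℝ≥0) : StrictMono η := by
  rcases (η.continuous.strictMono_of_inj η.injective) with h | h
  · exact h
  · exfalso
    obtain ⟨a, ha⟩ := η.surjective (η 0 + 1)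
    rcases eq_or_lt_of_le (zero_le : (0:ℝ≥0) ≤ a) with rfl | hpos
    · simp at ha
    · have := h hpos
      rw [ha] at this
      exact absurd this (by simp)

lemma eta_zero (η : ℝ≥0 ≃ₜ ℝ≥0) : η 0 = 0 := by
  have h := (eta_mono η).monotone (zero_le : (0:ℝ≥0) ≤ η.symm 0)
  simpa using h

lemma qm_conclude {C δ' ηt d12 dwz dA dB : ℝ} (hC0 : 0 < C) (hδ' : 0 < δ')
    (hηt : 0 ≤ ηt) (himg : d12 * dwz ≤ ηt * (dA * dB)) (hy : δ' ≤ d12)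
    (hA : dA ≤ C) (hB : dB ≤ C) (h0 : 0 ≤ dwz) (h0A : 0 ≤ dA) (h0B : 0 ≤ dB) :
    dwz ≤ C ^ 2 / δ' * ηt := by
  have t1 : δ' * dwz ≤ d12 * dwz := mul_le_mul_of_nonneg_right hy h0
  have t2 : dA * dB ≤ C ^ 2 := by nlinarith
  have t3 : ηt * (dA * dB) ≤ ηt * C ^ 2 := mul_le_mul_of_nonneg_left t2 hηt
  rw [show C ^ 2 / δ' * ηt = ηt * C ^ 2 / δ' by ring, le_div_iff₀ hδ']
  nlinarith

/-- Step A: points of the ball close together in the domain have images close together. -/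
lemma step_inside (η : ℝ≥0 ≃ₜ ℝ≥0) (hmono : Monotone η)
    (g : Z ≃ₜ Z) (hg : IsQuasiMobius η g) (p : Z) {R lamk δk εk M' δ' C : ℝ}
    (hR : 0 < R) (hlamk : 0 < lamk) (hδk : 0 < δk) (hδ' : 0 < δ') (hC0 : 0 < C)
    (hCd : ∀ a b : Z, dist a b ≤ C)
    (x : Fin 3 → Z)
    (hx : ∀ i, dist (x i) p ≤ lamk * R)
    (hxsep : ∀ i j : Fin 3, i ≠ j → δk * R < dist (x i) (x j))
    (hysep : ∀ i j : Fin 3, i ≠ j → δ' < dist (g (x i)) (g (x j)))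
    (hεδ : εk ≤ M' * δk ^ 2)
    (hd2l : δk < 2 * lamk)
    (hMlpr : M' * lamk ≤ 1/8) (hM'pos : 0 < M')
    {w d : Z} (hwd : dist w d ≤ εk * R) :
    dist (g w) (g d) ≤ C ^ 2 / δ' * ((η (Real.toNNReal (8 * M' * lamk)) : ℝ≥0) : ℝ) := by
  by_cases hweq : w = d
  · rw [hweq, dist_self]
    positivity
  have hxx2 : ∀ i j : Fin 3, dist (x i) (x j) ≤ 2 * (lamk * R) := by
    intro i j
    have a := hx i
    have b := hx j
    have := dist_triangle (x i) p (x j)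
    rw [dist_comm p (x j)] at this
    linarith
  have hεδR : εk * R ≤ δk * R / 4 := by
    have c1 : εk * R ≤ M' * δk ^ 2 * R := mul_le_mul_of_nonneg_right hεδ hR.le
    have c3 : M' * δk * R * δk ≤ M' * δk * R * (2 * lamk) :=
      mul_le_mul_of_nonneg_left hd2l.le (by positivity)
    have c5 : M' * lamk * (2 * (δk * R)) ≤ 1/8 * (2 * (δk * R)) :=
      mul_le_mul_of_nonneg_right hMlpr (by positivity)
    nlinarith
  have hδR2 : (0:ℝ) < δk * R / 2 := by positivity
  have hgood_d : ∀ i j : Fin 3, i ≠ j → dist (x i) d < δk * R / 2 →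
      δk * R / 2 ≤ dist (x j) d := by
    intro i j hij hi
    by_contra hj
    push_neg at hj
    have h1 := hxsep i j hij
    have h2 := dist_triangle (x i) d (x j)
    rw [dist_comm d (x j)] at h2
    linarith
  have hgood_w : ∀ i j : Fin 3, i ≠ j → dist (x i) w < δk * R / 2 →
      δk * R / 2 ≤ dist (x j) w := by
    intro i j hij hi
    by_contra hj
    push_neg at hj
    have h1 := hxsep i j hij
    have h2 := dist_triangle (x i) w (x j)
    rw [dist_comm w (x j)] at h2
    linarith
  obtain ⟨i, j, hij, hid, hjw⟩ : ∃ i j : Fin 3, i ≠ j ∧ δk * R / 2 ≤ dist (x i) d ∧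
      δk * R / 2 ≤ dist (x j) w := by
    by_cases h0 : dist (x 0) d < δk * R / 2
    · by_cases h1 : dist (x 1) w < δk * R / 2
      · exact ⟨1, 0, by decide, hgood_d 0 1 (by decide) h0, hgood_w 1 0 (by decide) h1⟩
      · push_neg at h1
        exact ⟨2, 1, by decide, hgood_d 0 2 (by decide) h0, h1⟩
    · push_neg at h0
      by_cases h1 : dist (x 1) w < δk * R / 2
      · exact ⟨0, 2, by decide, h0, hgood_w 1 2 (by decide) h1⟩
      · push_neg at h1
        exact ⟨0, 1, by decide, h0, h1⟩
  have hne_iw : x i ≠ w := by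
    intro h
    rw [h] at hid
    nlinarith
  have hne_ij : x i ≠ x j := by
    intro h
    have h2 := hxsep i j hij
    rw [h, dist_self] at h2
    nlinarith
  have hne_id : x i ≠ d := dist_pos.mp (lt_of_lt_of_le hδR2 hid)
  have hne_wj : w ≠ x j := (dist_pos.mp (lt_of_lt_of_le hδR2 hjw)).symm
  have hne_jd : x j ≠ d := by
    intro h
    rw [h, dist_comm] at hjw
    nlinarith
  have hco : ((Real.toNNReal (8 * M' * lamk)) : ℝ) = 8 * M' * lamk :=
    Real.coe_toNNReal _ (by positivity)
  have hcr : dist (x i) (x j) * dist w d ≤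
      ((Real.toNNReal (8 * M' * lamk) : ℝ≥0) : ℝ) * (dist (x i) d * dist w (x j)) := by
    rw [hco]
    have hjw' : δk * R / 2 ≤ dist w (x j) := by rwa [dist_comm] at hjw
    have e2 : δk * R / 2 * (δk * R / 2) ≤ dist (x i) d * dist w (x j) :=
      mul_le_mul hid hjw' hδR2.le (le_trans hδR2.le hid)
    have e1 : dist (x i) (x j) * dist w d ≤ (2 * (lamk * R)) * (εk * R) :=
      mul_le_mul (hxx2 i j) hwd dist_nonneg (by positivity)
    have e3 : εk * R ≤ M' * δk ^ 2 * R := mul_le_mul_of_nonneg_right hεδ hR.le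
    calc dist (x i) (x j) * dist w d ≤ (2 * (lamk * R)) * (εk * R) := e1
      _ ≤ (2 * (lamk * R)) * (M' * δk ^ 2 * R) :=
          mul_le_mul_of_nonneg_left e3 (by positivity)
      _ = 8 * M' * lamk * (δk * R / 2 * (δk * R / 2)) := by ring
      _ ≤ 8 * M' * lamk * (dist (x i) d * dist w (x j)) :=
          mul_le_mul_of_nonneg_left e2 (by positivity)
  have himg := qm_est η hmono g hg hne_iw hne_ij hne_id hne_wj hweq hne_jd hcr
  exact qm_conclude hC0 hδ' (NNReal.coe_nonneg _) himg (hysep i j hij).le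
    (hCd _ _) (hCd _ _) dist_nonneg dist_nonneg dist_nonneg

/-- Step B: points outside the ball have images close together. -/
lemma step_outside (η : ℝ≥0 ≃ₜ ℝ≥0) (hmono : Monotone η)
    (g : Z ≃ₜ Z) (hg : IsQuasiMobius η g) (p : Z) {R lamk δk δ' C : ℝ}
    (hR : 0 < R) (hlamk : 0 < lamk) (hδk : 0 < δk) (hδ' : 0 < δ') (hC0 : 0 < C)
    (hCd : ∀ a b : Z, dist a b ≤ C)
    (x : Fin 3 → Z)
    (hx : ∀ i, dist (x i) p ≤ lamk * R)
    (hxsep : ∀ i j : Fin 3, i ≠ j → δk * R < dist (x i) (x j))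
    (hysep : ∀ i j : Fin 3, i ≠ j → δ' < dist (g (x i)) (g (x j)))
    (hl2 : lamk ≤ 1/2)
    {w w' : Z} (haw : R ≤ dist w p) (haw' : R ≤ dist w' p) :
    dist (g w) (g w') ≤ C ^ 2 / δ' * ((η (Real.toNNReal (16 * lamk)) : ℝ≥0) : ℝ) := by
  by_cases hww : w = w'
  · rw [hww, dist_self]
    positivity
  have hlamR : lamk * R ≤ R / 2 := by nlinarith
  have hxlt : ∀ i, dist (x i) p < R := fun i => lt_of_le_of_lt (hx i) (by nlinarith)
  have hne_0w : x 0 ≠ w := by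
    intro h
    rw [← h] at haw
    exact absurd (hxlt 0) (not_lt.mpr haw)
  have hne_0w' : x 0 ≠ w' := by
    intro h
    rw [← h] at haw'
    exact absurd (hxlt 0) (not_lt.mpr haw')
  have hne_1w : x 1 ≠ w := by
    intro h
    rw [← h] at haw
    exact absurd (hxlt 1) (not_lt.mpr haw)
  have hne_1w' : x 1 ≠ w' := by
    intro h
    rw [← h] at haw'
    exact absurd (hxlt 1) (not_lt.mpr haw')
  have hne_01 : x 0 ≠ x 1 := by
    intro h
    have h2 := hxsep 0 1 (by decide)
    rw [h, dist_self] at h2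
    nlinarith
  have hcr : dist (x 0) (x 1) * dist w w' ≤
      ((Real.toNNReal (16 * lamk) : ℝ≥0) : ℝ) * (dist (x 0) w' * dist w (x 1)) := by
    rw [Real.coe_toNNReal _ (by positivity : (0:ℝ) ≤ 16 * lamk)]
    have d1 : dist (x 0) (x 1) ≤ 2 * (lamk * R) := by
      have a := hx 0
      have b := hx 1
      have := dist_triangle (x 0) p (x 1)
      rw [dist_comm p (x 1)] at this
      linarith
    have d2 : dist w w' ≤ dist w p + dist w' p := by
      have := dist_triangle w p w'
      rw [dist_comm p w'] at this
      linarith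
    have d3 : dist w' p - lamk * R ≤ dist (x 0) w' := by
      have h1 := dist_triangle w' (x 0) p
      rw [dist_comm w' (x 0)] at h1
      have := hx 0
      linarith
    have d4 : dist w p - lamk * R ≤ dist w (x 1) := by
      have h1 := dist_triangle w (x 1) p
      have := hx 1
      linarith
    have hb2 : dist w' p / 2 ≤ dist w' p - lamk * R := by nlinarith
    have ha2 : dist w p / 2 ≤ dist w p - lamk * R := by nlinarith
    have e1 : dist (x 0) (x 1) * dist w w' ≤ (2 * (lamk * R)) * (dist w p + dist w' p) :=
      mul_le_mul d1 d2 dist_nonneg (by positivity)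
    have e2 : (dist w' p - lamk * R) * (dist w p - lamk * R) ≤
        dist (x 0) w' * dist w (x 1) :=
      mul_le_mul d3 d4 (by nlinarith) (le_trans (by nlinarith) d3)
    have e3 : (2 * (lamk * R)) * (dist w p + dist w' p) ≤
        16 * lamk * ((dist w' p - lamk * R) * (dist w p - lamk * R)) := by
      have m1 : R * dist w p ≤ dist w' p * dist w p :=
        mul_le_mul_of_nonneg_right haw' (by linarith)
      have m2 : R * dist w' p ≤ dist w p * dist w' p :=
        mul_le_mul_of_nonneg_right haw (by linarith)
      have m3 : dist w p / 2 * (dist w' p / 2) ≤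
          (dist w p - lamk * R) * (dist w' p - lamk * R) :=
        mul_le_mul ha2 hb2 (by nlinarith) (by nlinarith)
      nlinarith
    calc dist (x 0) (x 1) * dist w w' ≤ (2 * (lamk * R)) * (dist w p + dist w' p) := e1
      _ ≤ 16 * lamk * ((dist w' p - lamk * R) * (dist w p - lamk * R)) := e3
      _ ≤ 16 * lamk * (dist (x 0) w' * dist w (x 1)) :=
          mul_le_mul_of_nonneg_left e2 (by positivity)
  have himg := qm_est η hmono g hg hne_0w hne_01 hne_0w' hne_1w.symm hww hne_1w' hcr
  exact qm_conclude hC0 hδ' (NNReal.coe_nonneg _) himg (hysep 0 1 (by decide)).le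
    (hCd _ _) (hCd _ _) dist_nonneg dist_nonneg dist_nonneg

/-- Step 4: if the image of the ball stays far from the bad point, the ball is tiny. -/
lemma step_ball (η : ℝ≥0 ≃ₜ ℝ≥0) (hmono : Monotone η)
    (g : Z ≃ₜ Z) (hg : IsQuasiMobius η g) (p : Z) {R lamk δk δ' C θ : ℝ}
    (hR : 0 < R) (hlamk : 0 < lamk) (hδk : 0 < δk) (hδ' : 0 < δ') (hC0 : 0 < C)
    (hθ : 0 < θ)
    (hCd : ∀ a b : Z, dist a b ≤ C)
    (x : Fin 3 → Z)
    (hx : ∀ i, dist (x i) p ≤ lamk * R)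
    (hxsep : ∀ i j : Fin 3, i ≠ j → δk * R < dist (x i) (x j))
    (hysep : ∀ i j : Fin 3, i ≠ j → δ' < dist (g (x i)) (g (x j)))
    (hl2 : lamk ≤ 1/2)
    (κ₀ : ℝ≥0) (hK : 0 < (κ₀ : ℝ)) (hηκ : ((η κ₀ : ℝ≥0) : ℝ) = θ * δ' / (8 * C ^ 2))
    {w b : Z} (hw : R ≤ dist w p) (hb : dist b p < R)
    (hzb : θ/4 ≤ dist (g w) (g b)) :
    dist p b ≤ lamk * R * (1 + 10 / (κ₀ : ℝ)) := by
  set K : ℝ := (κ₀ : ℝ) with hKdef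
  by_cases hx0b : dist (x 0) b ≤ 10 * (lamk * R) / K
  · have ht := dist_triangle p (x 0) b
    have hx0p : dist p (x 0) ≤ lamk * R := by rw [dist_comm]; exact hx 0
    have hid : lamk * R * (1 + 10/K) = lamk * R + 10 * (lamk * R) / K := by ring
    linarith
  exfalso
  push_neg at hx0b
  obtain ⟨j, hj0, hjb⟩ : ∃ j : Fin 3, j ≠ 0 ∧ x j ≠ b := by
    by_cases h1b : x 1 = b
    · refine ⟨2, by decide, fun h2b => ?_⟩
      have h2 := hxsep 1 2 (by decide)
      rw [h1b, h2b, dist_self] at h2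
      nlinarith
    · exact ⟨1, by decide, h1b⟩
  have hlamR : lamk * R ≤ R / 2 := by nlinarith
  have hxlt : ∀ i, dist (x i) p < R := fun i => lt_of_le_of_lt (hx i) (by nlinarith)
  have hne_w0 : w ≠ x 0 := by
    intro h
    rw [h] at hw
    exact absurd (hxlt 0) (not_lt.mpr hw)
  have hne_wb : w ≠ b := by
    intro h
    rw [h] at hw
    exact absurd hb (not_lt.mpr hw)
  have hne_wj : w ≠ x j := by
    intro h
    rw [h] at hw
    exact absurd (hxlt j) (not_lt.mpr hw)
  have hne_0b : x 0 ≠ b := by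
    apply dist_pos.mp
    apply lt_of_le_of_lt _ hx0b
    positivity
  have hne_0j : x 0 ≠ x j := by
    intro h
    have h2 := hxsep 0 j (Ne.symm hj0)
    rw [h, dist_self] at h2
    nlinarith
  have hne_bj : b ≠ x j := fun h => hjb h.symm
  have hwj : R/2 ≤ dist w (x j) := by
    have h1 := dist_triangle w (x j) p
    have := hx j
    linarith
  have hjb2 : dist (x j) b ≤ 2 * R := by
    have h1 := dist_triangle (x j) p b
    rw [dist_comm p b] at h1
    have := hx j
    linarith
  have hwb : dist w b ≤ 5 * dist w (x j) := by
    have h1 := dist_triangle w (x j) b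
    linarith
  have hcr : dist w b * dist (x 0) (x j) ≤
      (κ₀ : ℝ) * (dist w (x j) * dist (x 0) b) := by
    have hxx : dist (x 0) (x j) ≤ 2 * (lamk * R) := by
      have a := hx 0
      have b2 := hx j
      have := dist_triangle (x 0) p (x j)
      rw [dist_comm p (x j)] at this
      linarith
    have e1 : dist w b * dist (x 0) (x j) ≤ (5 * dist w (x j)) * (2 * (lamk * R)) :=
      mul_le_mul hwb hxx dist_nonneg (by positivity)
    have e2 : K * (10 * (lamk * R) / K) = 10 * (lamk * R) := by field_simp
    have e4 : 10 * (lamk * R) ≤ K * dist (x 0) b := by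
      rw [← e2]
      exact mul_le_mul_of_nonneg_left hx0b.le hK.le
    calc dist w b * dist (x 0) (x j)
        ≤ (5 * dist w (x j)) * (2 * (lamk * R)) := e1
      _ = dist w (x j) * (10 * (lamk * R)) := by ring
      _ ≤ dist w (x j) * (K * dist (x 0) b) :=
          mul_le_mul_of_nonneg_left e4 dist_nonneg
      _ = (κ₀ : ℝ) * (dist w (x j) * dist (x 0) b) := by rw [hKdef]; ring
  have himg := qm_est η hmono g hg hne_w0 hne_wb hne_wj hne_0b hne_0j hne_bj hcr
  have hyj : δ' < dist (g (x 0)) (g (x j)) := hysep 0 j (Ne.symm hj0)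
  have u1 : (θ/4) * δ' ≤ dist (g w) (g b) * dist (g (x 0)) (g (x j)) :=
    mul_le_mul hzb hyj.le hδ'.le dist_nonneg
  have u2 : ((η κ₀ : ℝ≥0) : ℝ) * (dist (g w) (g (x j)) * dist (g (x 0)) (g b)) ≤
      ((η κ₀ : ℝ≥0) : ℝ) * C ^ 2 := by
    apply mul_le_mul_of_nonneg_left _ (NNReal.coe_nonneg _)
    have := mul_le_mul (hCd (g w) (g (x j))) (hCd (g (x 0)) (g b)) dist_nonneg hC0.le
    nlinarith
  have u3 : ((η κ₀ : ℝ≥0) : ℝ) * C ^ 2 = θ * δ' / 8 := by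
    have hCne : C ≠ 0 := ne_of_gt hC0
    rw [hηκ]
    field_simp
  nlinarith [mul_pos hθ hδ']

end AuxQM

set_option maxHeartbeats 1000000 in
theorem image_dense_set_hausdorff_tendsto_zero
    {Z : Type*} [MetricSpace Z] [CompactSpace Z]
    (p : ℕ → Z) (R lam δ : ℕ → ℝ) (x : ℕ → Fin 3 → Z) (g : ℕ → (Z ≃ₜ Z))
    (η : ℝ≥0 ≃ₜ ℝ≥0) (δ' : ℝ) (hδ' : 0 < δ')
    (hR : ∀ k, 0 < R k) (hlam : ∀ k, 0 < lam k) (hδ : ∀ k, 0 < δ k)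
    (hx : ∀ k i, x k i ∈ Metric.closedBall (p k) (lam k * R k))
    (hxsep : ∀ k, ∀ i j : Fin 3, i ≠ j → δ k * R k < dist (x k i) (x k j))
    (hqm : ∀ k, IsQuasiMobius η (g k))
    (hysep : ∀ k, ∀ i j : Fin 3, i ≠ j → δ' < dist (g k (x k i)) (g k (x k j)))
    (hlam0 : Filter.Tendsto lam Filter.atTop (nhds 0))
    (D : ℕ → Set Z) (ε : ℕ → ℝ) (hε : ∀ k, 0 < ε k)
    (hD : ∀ k, D k ⊆ Metric.ball (p k) (R k))
    (hdense : ∀ k, ∀ z ∈ Metric.ball (p k) (R k), ∃ w ∈ D k, dist z w ≤ ε k * R k)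
    (hbdd : ∃ M : ℝ, ∀ k, ε k / (δ k) ^ 2 ≤ M)
    : Filter.Tendsto (fun k => Metric.hausdorffDist ((g k) '' D k) Set.univ)
        Filter.atTop (nhds 0) := by
  classical
  haveI : Nonempty Z := ⟨x 0 0⟩
  rw [Metric.tendsto_atTop]
  by_contra hcon
  push_neg at hcon
  obtain ⟨θ, hθ, hfreq0⟩ := hcon
  -- basic constants
  obtain ⟨M0, hM0⟩ := hbdd
  set M' : ℝ := max M0 1 with hM'def
  have hM1 : (1:ℝ) ≤ M' := le_max_right _ _
  have hM'pos : (0:ℝ) < M' := lt_of_lt_of_le one_pos hM1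
  have hεδ : ∀ k, ε k ≤ M' * δ k ^ 2 := by
    intro k
    have h1 : ε k / δ k ^ 2 ≤ M' := (hM0 k).trans (le_max_left _ _)
    have h2 : (0:ℝ) < δ k ^ 2 := pow_pos (hδ k) 2
    calc ε k = ε k / δ k ^ 2 * δ k ^ 2 := by rw [div_mul_cancel₀ _ h2.ne']
      _ ≤ M' * δ k ^ 2 := mul_le_mul_of_nonneg_right h1 h2.le
  have hxd : ∀ k i, dist (x k i) (p k) ≤ lam k * R k := fun k i =>
    Metric.mem_closedBall.mp (hx k i)
  have hdlam : ∀ k, δ k < 2 * lam k := by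
    intro k
    have h1 := hxsep k 0 1 (by decide)
    have h2 : dist (x k 0) (x k 1) ≤ 2 * (lam k * R k) := by
      have a := hxd k 0
      have b := hxd k 1
      have := dist_triangle (x k 0) (p k) (x k 1)
      rw [dist_comm (p k) (x k 1)] at this
      linarith
    have := hR k
    nlinarith
  have hMl : ∀ k, lam k ≤ 1/(8*M') → M' * lam k ≤ 1/8 := by
    intro k hk
    have h4 : M' * lam k ≤ M' * (1/(8*M')) := mul_le_mul_of_nonneg_left hk hM'pos.le
    have h5 : M' * (1/(8*M')) = 1/8 := by
      rw [mul_one_div, div_eq_div_iff (by positivity) (by norm_num)]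
      ring
    linarith
  set C : ℝ := Metric.diam (Set.univ : Set Z) with hCdef
  have hCd : ∀ a b : Z, dist a b ≤ C := fun a b =>
    Metric.dist_le_diam_of_mem isCompact_univ.isBounded (mem_univ a) (mem_univ b)
  have hC0 : 0 < C := hδ'.trans (lt_of_lt_of_le (hysep 0 0 1 (by decide)) (hCd _ _))
  -- eta facts
  have hmono : Monotone ⇑η := (eta_mono η).monotone
  have hη0 : η 0 = 0 := eta_zero η
  have hφ : ∀ c : ℝ, Filter.Tendsto (fun k => ((η (Real.toNNReal (c * lam k)) : ℝ≥0) : ℝ))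
      Filter.atTop (nhds 0) := by
    intro c
    have h1 : Filter.Tendsto (fun k => c * lam k) Filter.atTop (nhds 0) := by
      simpa using hlam0.const_mul c
    have h2 : Filter.Tendsto (fun k => Real.toNNReal (c * lam k)) Filter.atTop
        (nhds (0:ℝ≥0)) := by
      have := (continuous_real_toNNReal.tendsto 0).comp h1
      simpa [Function.comp_def] using this
    have h3 := (η.continuous.tendsto 0).comp h2
    rw [hη0] at h3
    have h4 := (NNReal.continuous_coe.tendsto 0).comp h3
    simpa [Function.comp_def] using h4
  set A : ℕ → ℝ := fun k => C^2/δ' * ((η (Real.toNNReal (8*M'*lam k)) : ℝ≥0) : ℝ) with hAdef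
  set r : ℕ → ℝ := fun k => C^2/δ' * ((η (Real.toNNReal (16*lam k)) : ℝ≥0) : ℝ) with hrdef
  have hA0 : ∀ k, 0 ≤ A k := by intro k; simp only [hAdef]; positivity
  have hr0 : ∀ k, 0 ≤ r k := by intro k; simp only [hrdef]; positivity
  have hAlim : Filter.Tendsto A Filter.atTop (nhds 0) := by
    have h1 := (hφ (8*M')).const_mul (C^2/δ')
    rw [mul_zero] at h1
    exact h1
  have hrlim : Filter.Tendsto r Filter.atTop (nhds 0) := by
    have h1 := (hφ 16).const_mul (C^2/δ')
    rw [mul_zero] at h1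
    exact h1
  -- the key constant κ₀
  have hs0pos : 0 < θ*δ'/(8*C^2) := by positivity
  set κ₀ : ℝ≥0 := η.symm (Real.toNNReal (θ*δ'/(8*C^2))) with hκdef
  set K : ℝ := (κ₀ : ℝ) with hKdef
  have hηκ : ((η κ₀ : ℝ≥0) : ℝ) = θ*δ'/(8*C^2) := by
    rw [hκdef, Homeomorph.apply_symm_apply]
    exact Real.coe_toNNReal _ hs0pos.le
  have hK : 0 < K := by
    rw [hKdef, NNReal.coe_pos, pos_iff_ne_zero]
    intro h0
    have h1 : ((η κ₀ : ℝ≥0) : ℝ) = 0 := by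
      rw [hκdef] at h0 ⊢
      rw [h0, hη0]
      simp
    rw [hηκ] at h1
    exact absurd h1 (ne_of_gt hs0pos)
  -- the bad-point predicate
  set P : ℕ → Z → Prop := fun k z => ∀ d ∈ D k, θ/2 < dist z (g k d) with hPdef
  have hex : ∀ k, θ ≤ Metric.hausdorffDist ((g k) '' D k) Set.univ → ∃ z, P k z := by
    intro k hk
    by_contra hno
    simp only [hPdef] at hno
    push_neg at hno
    have hle : Metric.hausdorffDist ((g k) '' D k) Set.univ ≤ θ/2 := by
      apply Metric.hausdorffDist_le_of_mem_dist (by linarith)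
      · intro y _
        exact ⟨y, mem_univ y, by rw [dist_self]; linarith⟩
      · intro z _
        obtain ⟨d, hd, hdd⟩ := hno z
        exact ⟨g k d, mem_image_of_mem _ hd, hdd⟩
    linarith
  set S : Set ℕ := {k | ∃ z, P k z} with hSdef
  obtain ⟨zch, hPz⟩ : ∃ zch : ℕ → Z, ∀ k, (∃ z, P k z) → P k (zch k) := by
    refine ⟨fun k => if h : ∃ z, P k z then h.choose else x 0 0, fun k hk => ?_⟩
    simp only [dif_pos hk]
    exact hk.choose_spec
  have hSfreq : ∃ᶠ k in Filter.atTop, k ∈ S := by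
    rw [Filter.frequently_atTop]
    intro N
    obtain ⟨n, hn, hθn⟩ := hfreq0 N
    refine ⟨n, hn, hex n ?_⟩
    rwa [Real.dist_0_eq_abs, abs_of_nonneg Metric.hausdorffDist_nonneg] at hθn
  set L : Filter ℕ := Filter.atTop ⊓ Filter.principal S with hLdef
  haveI hLne : L.NeBot := by
    rw [hLdef, hSdef, ← Filter.frequently_iff_neBot]
    simpa [hSdef] using hSfreq
  -- cluster point of the bad points
  obtain ⟨zs, -, hzs⟩ := isCompact_univ.exists_clusterPt (f := Filter.map zch L) (by simp)
  have hmc : MapClusterPt zs L zch := hzs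
  have hfr : ∀ U ∈ nhds zs, ∃ᶠ k in L, zch k ∈ U := mapClusterPt_iff_frequently.mp hmc
  -- step A
  have stepA : ∀ k, lam k ≤ 1/(8*M') → ∀ w ∈ Metric.ball (p k) (R k),
      ∃ d ∈ D k, dist (g k w) (g k d) ≤ A k := by
    intro k hk w hw
    obtain ⟨d, hdD, hwd⟩ := hdense k w hw
    refine ⟨d, hdD, ?_⟩
    have h1 := step_inside η hmono (g k) (hqm k) (p k) (hR k) (hlam k) (hδ k) hδ' hC0
      hCd (x k) (hxd k) (hxsep k) (hysep k) (hεδ k) (hdlam k) (hMl k hk) hM'pos hwd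
    simpa [hAdef] using h1
  -- step B
  have stepB : ∀ k, lam k ≤ 1/2 → ∀ w w' : Z, w ∉ Metric.ball (p k) (R k) →
      w' ∉ Metric.ball (p k) (R k) → dist (g k w) (g k w') ≤ r k := by
    intro k hk w w' hw hw'
    rw [Metric.mem_ball] at hw hw'
    have h1 := step_outside η hmono (g k) (hqm k) (p k) (hR k) (hlam k) (hδ k) hδ' hC0
      hCd (x k) (hxd k) (hxsep k) (hysep k) hk (not_lt.mp hw) (not_lt.mp hw')
    simpa [hrdef] using h1
  -- step 3'
  have step3' : ∀ k z, P k z → lam k ≤ 1/(8*M') → ∀ b ∈ Metric.ball (p k) (R k),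
      θ/2 - A k ≤ dist z (g k b) := by
    intro k z hPk hk b hb
    simp only [hPdef] at hPk
    obtain ⟨d, hdD, hdd⟩ := stepA k hk b hb
    have h1 := hPk d hdD
    have h2 := dist_triangle z (g k b) (g k d)
    linarith
  have step3 : ∀ k z, P k z → lam k ≤ 1/(8*M') → A k < θ/8 →
      (g k).symm z ∉ Metric.ball (p k) (R k) := by
    intro k z hPk hk hA8 hball
    have h1 := step3' k z hPk hk _ hball
    rw [Homeomorph.apply_symm_apply, dist_self] at h1
    linarith
  -- annulus emptiness around a bad point
  have stepAnn : ∀ k (z : Z), P k z → lam k ≤ 1/2 → lam k ≤ 1/(8*M') → A k < θ/8 →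
      ∀ v : Z, dist v z < θ/4 → dist v z ≤ r k := by
    intro k z hPk h12 h8 hA8 v hv
    by_cases hu : (g k).symm v ∈ Metric.ball (p k) (R k)
    · exfalso
      have h3' := step3' k z hPk h8 _ hu
      rw [Homeomorph.apply_symm_apply] at h3'
      rw [dist_comm] at h3'
      linarith
    · have hwo := step3 k z hPk h8 hA8
      have h2 := stepB k h12 ((g k).symm v) ((g k).symm z) hu hwo
      rwa [Homeomorph.apply_symm_apply, Homeomorph.apply_symm_apply] at h2
  -- eventual conditions along atTop
  have hE1 : ∀ᶠ k in Filter.atTop, lam k ≤ 1/2 :=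
    (hlam0.eventually_lt_const (by norm_num : (0:ℝ) < 1/2)).mono fun k h => h.le
  have hE2 : ∀ᶠ k in Filter.atTop, lam k ≤ 1/(8*M') :=
    (hlam0.eventually_lt_const (by positivity : (0:ℝ) < 1/(8*M'))).mono fun k h => h.le
  have hE3 : ∀ᶠ k in Filter.atTop, A k < θ/8 := hAlim.eventually_lt_const (by linarith)
  have hE4 : ∀ᶠ k in Filter.atTop, r k < θ/8 := hrlim.eventually_lt_const (by linarith)
  have hE5 : ∀ᶠ k in Filter.atTop, (2*C*(1+10/K))*lam k < δ' := by
    have h1 : Filter.Tendsto (fun k => (2*C*(1+10/K))*lam k) Filter.atTop (nhds 0) := by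
      have := hlam0.const_mul (2*C*(1+10/K))
      rwa [mul_zero] at this
    exact h1.eventually_lt_const hδ'
  have hmemS : ∀ᶠ k in L, k ∈ S := by
    rw [hLdef, Filter.eventually_inf_principal]
    exact Filter.Eventually.of_forall fun k hk => hk
  -- isolation of the cluster point
  have hiso : ∀ v : Z, v ≠ zs → θ/8 ≤ dist v zs := by
    intro v hv
    by_contra hlt
    push_neg at hlt
    have hs0 : 0 < dist v zs := dist_pos.2 hv
    have hevr : ∀ᶠ k in Filter.atTop, r k < dist v zs / 2 :=
      hrlim.eventually_lt_const (by linarith)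
    have hev2 : ∀ᶠ k in L, (k ∈ S ∧ (lam k ≤ 1/2 ∧ lam k ≤ 1/(8*M') ∧ A k < θ/8 ∧
        r k < dist v zs / 2)) :=
      hmemS.and ((hE1.and (hE2.and (hE3.and hevr))).filter_mono inf_le_left)
    obtain ⟨k, hmemb, hkS, h12, h8, hA8, hrs⟩ :=
      ((hfr (Metric.ball zs (dist v zs / 2))
        (Metric.ball_mem_nhds _ (by linarith))).and_eventually hev2).exists
    have hPk := hPz k hkS
    have hzd : dist (zch k) zs < dist v zs / 2 := Metric.mem_ball.mp hmemb
    have hd1 : dist v (zch k) < θ/4 := by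
      have h1 := dist_triangle v zs (zch k)
      rw [dist_comm zs (zch k)] at h1
      linarith
    have hd2 := stepAnn k (zch k) hPk h12 h8 hA8 v hd1
    have hd3 : dist v zs / 2 ≤ dist v (zch k) := by
      have := dist_triangle v (zch k) zs
      linarith
    linarith
  -- pick the final index k
  have hev3 : ∀ᶠ k in L, (k ∈ S ∧ (lam k ≤ 1/2 ∧ lam k ≤ 1/(8*M') ∧ A k < θ/8 ∧
      r k < θ/8 ∧ (2*C*(1+10/K))*lam k < δ')) :=
    hmemS.and ((hE1.and (hE2.and (hE3.and (hE4.and hE5)))).filter_mono inf_le_left)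
  obtain ⟨k, hmemb, hkS, h12, h8, hA8, hr8, hE5k⟩ :=
    ((hfr (Metric.ball zs (θ/8))
      (Metric.ball_mem_nhds _ (by linarith))).and_eventually hev3).exists
  have hPk := hPz k hkS
  have hzz : zch k = zs := by
    by_contra hne
    exact absurd (hiso _ hne) (not_le.2 (Metric.mem_ball.mp hmemb))
  rw [hzz] at hPk
  have hwout : (g k).symm zs ∉ Metric.ball (p k) (R k) := step3 k zs hPk h8 hA8
  have hgw : g k ((g k).symm zs) = zs := Homeomorph.apply_symm_apply _ _
  have hwp : R k ≤ dist ((g k).symm zs) (p k) := by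
    rw [Metric.mem_ball] at hwout
    exact not_lt.mp hwout
  -- step 4
  have h4 : ∀ b ∈ Metric.ball (p k) (R k), dist (p k) b ≤ lam k * R k * (1+10/K) := by
    intro b hb
    have hzb : θ/4 ≤ dist (g k ((g k).symm zs)) (g k b) := by
      rw [hgw]
      have := step3' k zs hPk h8 b hb
      linarith
    exact step_ball η hmono (g k) (hqm k) (p k) (hR k) (hlam k) (hδ k) hδ' hC0 hθ
      hCd (x k) (hxd k) (hxsep k) (hysep k) h12 κ₀ hK hηκ hwp (Metric.mem_ball.mp hb) hzb
  -- step 5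
  have h5 : ∀ v : Z, v ∉ Metric.ball (p k) (R k) → v = (g k).symm zs := by
    intro v hv
    by_contra hne
    have hgv : g k v ≠ zs := by
      rw [← hgw]
      exact fun h => hne ((g k).injective h)
    have h1 := hiso _ hgv
    have h2 := stepB k h12 v ((g k).symm zs) hv hwout
    rw [hgw] at h2
    linarith
  -- step 6 : contradiction
  obtain ⟨i, j, hij, hi, hj⟩ : ∃ i j : Fin 3, i ≠ j ∧ g k (x k i) ≠ (g k).symm zs ∧
      g k (x k j) ≠ (g k).symm zs := by
    by_cases h0 : g k (x k 0) = (g k).symm zs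
    · refine ⟨1, 2, by decide, ?_, ?_⟩
      · intro h
        have h3 := (g k).injective (h.trans h0.symm)
        have h2 := hxsep k 0 1 (by decide)
        rw [← h3, dist_self] at h2
        nlinarith [hδ k, hR k]
      · intro h
        have h3 := (g k).injective (h.trans h0.symm)
        have h2 := hxsep k 0 2 (by decide)
        rw [← h3, dist_self] at h2
        nlinarith [hδ k, hR k]
    · by_cases h1 : g k (x k 1) = (g k).symm zs
      · refine ⟨0, 2, by decide, h0, ?_⟩
        intro h
        have h3 := (g k).injective (h.trans h1.symm)
        have h2 := hxsep k 1 2 (by decide)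
        rw [← h3, dist_self] at h2
        nlinarith [hδ k, hR k]
      · exact ⟨0, 1, by decide, h0, h1⟩
  have hib : g k (x k i) ∈ Metric.ball (p k) (R k) := by
    by_contra h
    exact hi (h5 _ h)
  have hjb : g k (x k j) ∈ Metric.ball (p k) (R k) := by
    by_contra h
    exact hj (h5 _ h)
  have d1 := h4 _ hib
  have d2 := h4 _ hjb
  have dyy : dist (g k (x k i)) (g k (x k j)) ≤ 2*(lam k * R k * (1+10/K)) := by
    have h1 := dist_triangle (g k (x k i)) (p k) (g k (x k j))
    rw [dist_comm (g k (x k i)) (p k)] at h1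
    linarith
  have hRC : R k ≤ C := hwp.trans (hCd _ _)
  have hfin := hysep k i j hij
  have hKinv : (0:ℝ) < 10/K := div_pos (by norm_num) hK
  have h1K : (0:ℝ) < 1 + 10/K := by linarith
  have h2l : (0:ℝ) ≤ 2 * lam k := by linarith [hlam k]
  nlinarith [mul_le_mul_of_nonneg_right hRC (mul_nonneg h2l h1K.le), hlam k]
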